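/- arXiv:1506.01233 — 3 statements merged into one kernel-verified Lean document; each statement's English description precedes it below -/
import Mathlib

section
/- The oscillator circuit C of Example 2 is not K-Lipschitz robust for any K with respect to timed Manhattan distances: its output on input i₂ (which is 1 on [0,ε) and 0 elsewhere on [0,T]) is 1 exactly on ⋃_{j=0}^{⌊T⌋} [j, j+ε) ∩ [0,T], while its output on the zero input i₁ is constantly 0; hence d_TM(output) ≥ ⌊T⌋·ε while d_TM(i₁,i₂) = ε, and for any K choose T > K+1 to violate K-robustness. -/
/-!
The zero input and the pulse `[0,ε)` are at distance `ε`, but the oscillator repeats the pulse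
once per time unit, so on `[0,T]` the two outputs differ on the `T` disjoint intervals
`[j, j+ε)`, `j < T`, i.e. on a set of measure at least `Tε`. Taking `T > K` breaks any
`K`-Lipschitz bound.
-/

open MeasureTheory Set Function

theorem setIntegral_abs_indicator_one_sub_zero {α : Type*} [MeasurableSpace α] (μ : Measure α)
    {S : Set α} (hS : MeasurableSet S) (s : Set α) :
    ∫ x in s, |S.indicator (fun _ => (1 : ℝ)) x - 0| ∂μ = μ.real (S ∩ s) := by
  have h : ∀ x, |S.indicator (fun _ => (1 : ℝ)) x - 0| = S.indicator 1 x := fun x => by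
    rw [sub_zero, abs_of_nonneg (indicator_nonneg (fun _ _ => zero_le_one) x)]; rfl
  simp only [h, integral_indicator_one hS, measureReal_restrict_apply hS]

section Pulses

variable {ε : ℝ}

theorem pairwise_disjoint_Ico_natCast_add (hε : ε ≤ 1) :
    Pairwise (Disjoint on fun j : ℕ => Ico (j : ℝ) (j + ε)) := by
  intro i j hij
  wlog h : i < j generalizing i j
  · exact (this hij.symm (hij.lt_or_gt.resolve_left h)).symm
  have hij' : (i : ℝ) + 1 ≤ j := by exact_mod_cast h
  exact Ico_disjoint_Ico_same.mono_left (Ico_subset_Ico_right (by linarith))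

theorem volume_real_biUnion_range_Ico_natCast_add (hε₀ : 0 ≤ ε) (hε : ε ≤ 1) (n : ℕ) :
    volume.real (⋃ j ∈ Finset.range n, Ico (j : ℝ) (j + ε)) = n * ε := by
  rw [measureReal_biUnion_finset ((pairwise_disjoint_Ico_natCast_add hε).set_pairwise _)
    (fun _ _ => measurableSet_Ico) (fun _ _ => by simp [Real.volume_Ico])]
  simp [Real.volume_real_Ico, hε₀]

theorem biUnion_range_Ico_natCast_add_subset (hε : ε ≤ 1) (n : ℕ) :
    ⋃ j ∈ Finset.range n, Ico (j : ℝ) (j + ε) ⊆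
      (⋃ j : ℕ, Ico (j : ℝ) (j + ε)) ∩ Icc 0 (n : ℝ) := by
  simp only [iUnion_subset_iff, Finset.mem_range]
  intro j hj x hx
  have hjn : (j : ℝ) + 1 ≤ n := by exact_mod_cast hj
  exact ⟨mem_iUnion_of_mem j hx, (Nat.cast_nonneg j).trans hx.1, by linarith [hx.2]⟩

theorem natCast_mul_le_volume_real_iUnion_Ico_natCast_add_inter_Icc (hε₀ : 0 ≤ ε) (hε : ε ≤ 1)
    (n : ℕ) : n * ε ≤ volume.real ((⋃ j : ℕ, Ico (j : ℝ) (j + ε)) ∩ Icc 0 (n : ℝ)) := by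
  rw [← volume_real_biUnion_range_Ico_natCast_add hε₀ hε n]
  exact measureReal_mono (biUnion_range_Ico_natCast_add_subset hε n)
    (measure_ne_top_of_subset inter_subset_right (by simp [Real.volume_Icc]))

end Pulses

/-- Example 2, circuit `C`: the output on the transient-fault input `i₂`
(indicator of `[0,ε)`) is the indicator of `⋃ j, [j, j+ε)`, while the output on
the zero input is zero.  `C` is not `K`-Lipschitz robust w.r.t. timed Manhattan
distances, for any `K`. -/
theorem oscillator_not_robust :
    ∀ K : ℝ, 0 < K → ∃ (T : ℕ) (ε : ℝ), 0 < ε ∧ ε < 1 ∧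
      (∫ x in Set.Icc (0 : ℝ) T,
          |Set.indicator (⋃ j : ℕ, Set.Ico (j : ℝ) ((j : ℝ) + ε)) (fun _ => (1 : ℝ)) x - 0|) >
        K * ∫ x in Set.Icc (0 : ℝ) T,
          |Set.indicator (Set.Ico (0 : ℝ) ε) (fun _ => (1 : ℝ)) x - 0| := by
  intro K hK
  obtain ⟨T, hKT⟩ := exists_nat_gt K
  have hT : (1 : ℝ) ≤ T := Nat.one_le_cast.mpr (Nat.cast_pos.mp (hK.trans hKT))
  refine ⟨T, 1 / 2, by norm_num, by norm_num, ?_⟩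
  have hinput : Ico (0 : ℝ) (1 / 2) ∩ Icc 0 (T : ℝ) = Ico 0 (1 / 2) :=
    inter_eq_left.mpr fun x hx => ⟨hx.1, by linarith [hx.2, hT]⟩
  rw [setIntegral_abs_indicator_one_sub_zero _ (MeasurableSet.iUnion fun _ => measurableSet_Ico),
    setIntegral_abs_indicator_one_sub_zero _ measurableSet_Ico, hinput, Real.volume_real_Ico]
  calc K * max (1 / 2 - 0) 0 = K * (1 / 2) := by norm_num
    _ < T * (1 / 2) := by linarith
    _ ≤ _ :=
      natCast_mul_le_volume_real_iUnion_Ico_natCast_add_inter_Icc (by norm_num) (by norm_num) T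
end

section
/- The Skorokhod distance realized over piecewise linear distortions is no larger than over arbitrary continuous bijections: for step functions f, g on [0,T] where g has n value-change points, for every λ ∈ Λ (continuous increasing bijection of [0,T] fixing endpoints) there exists a piecewise linear μ ∈ Λ with at most n+1 linear pieces such that g ∘ μ = g ∘ λ pointwise. -/
/-- `μ` is piecewise linear on `[0,T]` with at most `k` linear pieces. -/
def PiecewiseLinearOn (T : ℝ) (k : ℕ) (μ : ℝ → ℝ) : Prop :=
  ∃ m : ℕ, m ≤ k ∧ ∃ p : Fin (m + 1) → ℝ, Monotone p ∧ p 0 = 0 ∧ p (Fin.last m) = T ∧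
    ∀ i : Fin m, ∃ a b : ℝ, ∀ x ∈ Set.Icc (p i.castSucc) (p i.succ), μ x = a * x + b

/-- `g` is a step function on `[0,T]` changing value only at `t 0 < … < t (n-1)`. -/
def IsStepWithChanges {α : Type*} (T : ℝ) (g : ℝ → α) (n : ℕ) (t : Fin n → ℝ) : Prop :=
  StrictMono t ∧ (∀ j, t j ∈ Set.Ioo (0 : ℝ) T) ∧
    ∀ x ∈ Set.Icc (0 : ℝ) T, ∀ y ∈ Set.Icc (0 : ℝ) T,
      (∀ j, (t j ≤ x ↔ t j ≤ y)) → g x = g y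

/-!
Interpolate `λ` linearly between the points `0 < s₀ < … < s_{n-1} < T` with `λ sⱼ = tⱼ`.
The interpolant `μ` is again an increasing homeomorphism of `[0,T]` and agrees with `λ` at
every `sⱼ`, so `tⱼ ≤ μ x ↔ sⱼ ≤ x ↔ tⱼ ≤ λ x` for all `j`: the values `μ x` and `λ x` lie in
the same interval of constancy of `g`.
-/

open Set

/-- The sequence `a, t 0, …, t (n - 1), b, b, …`. -/
def padEnds {β : Type*} (a b : β) {n : ℕ} (t : Fin n → β) (k : ℕ) : β :=
  if k = 0 then a else if h : k - 1 < n then t ⟨k - 1, h⟩ else b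

section padEnds

variable {β : Type*} {a b : β} {n : ℕ} {t : Fin n → β}

@[simp] lemma padEnds_zero : padEnds a b t 0 = a := rfl

@[simp] lemma padEnds_succ (j : Fin n) : padEnds a b t (j + 1) = t j := by
  simp [padEnds]

@[simp] lemma padEnds_add_one : padEnds a b t (n + 1) = b := by
  simp [padEnds]

lemma padEnds_mem [Preorder β] (hab : a ≤ b) (ht : ∀ j, t j ∈ Icc a b) (k : ℕ) :
    padEnds a b t k ∈ Icc a b := by
  unfold padEnds
  split_ifs
  exacts [left_mem_Icc.2 hab, ht _, right_mem_Icc.2 hab]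

lemma strictMonoOn_padEnds [Preorder β] (hab : a < b) (ht : StrictMono t)
    (htab : ∀ j, t j ∈ Ioo a b) : StrictMonoOn (padEnds a b t) (Iic (n + 1)) := by
  refine strictMonoOn_Iic_of_lt_succ fun k hk => ?_
  simp only [padEnds, Order.succ_eq_add_one]
  split_ifs <;> first
    | contradiction | omega | exact hab | exact (htab _).1 | exact (htab _).2
    | exact ht (Fin.mk_lt_mk.2 (by omega))

end padEnds

lemma StrictMonoOn.exists_strictMonoOn_comp_eq {α β ι : Type*} [LinearOrder α] [Preorder β]
    [Preorder ι] {f : α → β} {s : Set α} {u : Set β} {I : Set ι} {v : ι → β}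
    (hf : StrictMonoOn f s) (hsurj : SurjOn f s u) (hvu : ∀ k, v k ∈ u)
    (hv : StrictMonoOn v I) : ∃ q : ι → α, (∀ k, q k ∈ s) ∧ f ∘ q = v ∧ StrictMonoOn q I := by
  choose q hqs hfq using fun k => hsurj (hvu k)
  refine ⟨q, hqs, funext hfq, fun i hi j hj hij => ?_⟩
  rw [← hf.lt_iff_lt (hqs i) (hqs j), hfq, hfq]
  exact hv hi hj hij

lemma StrictMonoOn.bijOn_Icc {α δ : Type*} [ConditionallyCompleteLinearOrder α]
    [TopologicalSpace α] [OrderTopology α] [DenselyOrdered α] [LinearOrder δ]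
    [TopologicalSpace δ] [OrderClosedTopology δ] {f : α → δ} {a b : α} (hab : a ≤ b)
    (hf : StrictMonoOn f (Icc a b)) (hc : ContinuousOn f (Icc a b)) :
    BijOn f (Icc a b) (Icc (f a) (f b)) :=
  ⟨fun _ hx => ⟨hf.monotoneOn (left_mem_Icc.2 hab) hx hx.1,
    hf.monotoneOn hx (right_mem_Icc.2 hab) hx.2⟩, hf.injOn, intermediate_value_Icc hab hc⟩

lemma IsStepWithChanges.comp_eq_comp {α : Type*} {T : ℝ} {g : ℝ → α} {n : ℕ} {t : Fin n → ℝ}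
    (hg : IsStepWithChanges T g n t) {φ ψ : ℝ → ℝ} (hφ : StrictMonoOn φ (Icc 0 T))
    (hψ : StrictMonoOn ψ (Icc 0 T)) (hφT : MapsTo φ (Icc 0 T) (Icc 0 T))
    (hψT : MapsTo ψ (Icc 0 T) (Icc 0 T)) {s : Fin n → ℝ} (hs : ∀ j, s j ∈ Icc 0 T)
    (hφs : ∀ j, φ (s j) = t j) (hψs : ∀ j, ψ (s j) = t j) {x : ℝ} (hx : x ∈ Icc 0 T) :
    g (φ x) = g (ψ x) :=
  hg.2.2 _ (hφT hx) _ (hψT hx) fun j =>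
    calc t j ≤ φ x ↔ s j ≤ x := by rw [← hφs j]; exact hφ.le_iff_le (hs j) hx
      _ ↔ t j ≤ ψ x := by rw [← hψs j]; exact (hψ.le_iff_le (hs j) hx).symm

/-- The `i`-th summand is the ramp `min x (q (i + 1)) - min x (q i)`, which rises with slope one
across `[q i, q (i + 1)]` and is constant elsewhere, scaled to the slope of `f` there. -/
noncomputable def linInterp (f : ℝ → ℝ) (q : ℕ → ℝ) (m : ℕ) (x : ℝ) : ℝ :=
  f (q 0) + ∑ i ∈ Finset.range m, slope f (q i) (q (i + 1)) * (min x (q (i + 1)) - min x (q i))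

section linInterp

variable {f : ℝ → ℝ} {q : ℕ → ℝ} {m : ℕ}

lemma linInterp_succ (x : ℝ) : linInterp f q (m + 1) x =
    linInterp f q m x + slope f (q m) (q (m + 1)) * (min x (q (m + 1)) - min x (q m)) := by
  simp only [linInterp, Finset.sum_range_succ, add_assoc]

lemma continuous_linInterp : Continuous (linInterp f q m) := by
  unfold linInterp
  fun_prop

lemma linInterp_of_le (hq : StrictMonoOn q (Iic m)) {x : ℝ} (hx : q m ≤ x) :
    linInterp f q m x = f (q m) := by
  induction m with
  | zero => simp [linInterp]
  | succ m ih =>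
    have hlt : q m < q (m + 1) := hq (by simp) (mem_Iic.2 le_rfl) (Nat.lt_succ_self m)
    rw [linInterp_succ, ih (hq.mono (Iic_subset_Iic.2 m.le_succ)) (hlt.le.trans hx),
      min_eq_right hx, min_eq_right (hlt.le.trans hx), slope_def_field,
      div_mul_cancel₀ _ (sub_ne_zero.2 hlt.ne')]
    ring

lemma linInterp_of_mem_Icc (hq : StrictMonoOn q (Iic m)) {k : ℕ} (hk : k < m) {x : ℝ}
    (hx : x ∈ Icc (q k) (q (k + 1))) :
    linInterp f q m x = f (q k) + slope f (q k) (q (k + 1)) * (x - q k) := by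
  induction m with
  | zero => omega
  | succ m ih =>
    have hq' : StrictMonoOn q (Iic m) := hq.mono (Iic_subset_Iic.2 m.le_succ)
    rw [linInterp_succ]
    rcases (Nat.lt_succ_iff.1 hk).lt_or_eq with hk | rfl
    · have hxm : x ≤ q m := hx.2.trans (hq'.monotoneOn (mem_Iic.2 hk) (mem_Iic.2 le_rfl) hk)
      have hxm' : x ≤ q (m + 1) :=
        hxm.trans (hq.monotoneOn (by simp) (mem_Iic.2 le_rfl) m.le_succ)
      rw [ih hq' hk, min_eq_left hxm, min_eq_left hxm', sub_self, mul_zero, add_zero]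
    · rw [linInterp_of_le hq' hx.1, min_eq_left hx.2, min_eq_right hx.1]

lemma linInterp_apply_node (hq : StrictMonoOn q (Iic m)) {k : ℕ} (hk : k ≤ m) :
    linInterp f q m (q k) = f (q k) := by
  rcases hk.lt_or_eq with hk | rfl
  · rw [linInterp_of_mem_Icc hq hk ⟨le_rfl, (hq (mem_Iic.2 hk.le) hk (k.lt_succ_self)).le⟩,
      sub_self, mul_zero, add_zero]
  · exact linInterp_of_le hq le_rfl

lemma strictMonoOn_linInterp (hq : StrictMonoOn q (Iic m)) (hf : StrictMonoOn (f ∘ q) (Iic m)) :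
    StrictMonoOn (linInterp f q m) (Icc (q 0) (q m)) := by
  suffices ∀ k ≤ m, StrictMonoOn (linInterp f q m) (Icc (q 0) (q k)) from this m le_rfl
  intro k hk
  induction k with
  | zero => simp
  | succ k ih =>
    have hkm : k ∈ Iic m := mem_Iic.2 (by omega)
    have hlt : q k < q (k + 1) := hq hkm hk k.lt_succ_self
    have hpiece : StrictMonoOn (linInterp f q m) (Icc (q k) (q (k + 1))) := by
      intro x hx y hy hxy
      have hslope : 0 < slope f (q k) (q (k + 1)) := by
        rw [slope_def_field]
        exact div_pos (sub_pos.2 (hf hkm hk k.lt_succ_self)) (sub_pos.2 hlt)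
      rw [linInterp_of_mem_Icc hq hk hx, linInterp_of_mem_Icc hq hk hy]
      gcongr
    rw [← Icc_union_Icc_eq_Icc (hq.monotoneOn (by simp) hkm k.zero_le) hlt.le]
    exact (ih (by omega)).union hpiece (isGreatest_Icc (hq.monotoneOn (by simp) hkm k.zero_le))
      (isLeast_Icc hlt.le)

lemma piecewiseLinearOn_linInterp {T : ℝ} (hq : StrictMonoOn q (Iic m)) (hq0 : q 0 = 0)
    (hqm : q m = T) : PiecewiseLinearOn T m (linInterp f q m) := by
  refine ⟨m, le_rfl, fun i => q i, fun i j hij => hq.monotoneOn i.is_le j.is_le hij, hq0, hqm,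
    fun i => ⟨slope f (q i) (q (i + 1)), f (q i) - slope f (q i) (q (i + 1)) * q i,
      fun x hx => ?_⟩⟩
  rw [linInterp_of_mem_Icc hq i.isLt hx]
  ring

end linInterp

theorem skorokhod_piecewise_linear_general {α : Type*} (T : ℝ) (hT : 0 < T)
    (g : ℝ → α) (n : ℕ) (t : Fin n → ℝ) (hg : IsStepWithChanges T g n t)
    (l : ℝ → ℝ)
    (hmono : StrictMonoOn l (Set.Icc 0 T))
    (hbij : Set.BijOn l (Set.Icc 0 T) (Set.Icc 0 T)) (h0 : l 0 = 0) (hTfix : l T = T) :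
    ∃ μ : ℝ → ℝ, PiecewiseLinearOn T (n + 1) μ ∧
      ContinuousOn μ (Set.Icc 0 T) ∧ StrictMonoOn μ (Set.Icc 0 T) ∧
      Set.BijOn μ (Set.Icc 0 T) (Set.Icc 0 T) ∧ μ 0 = 0 ∧ μ T = T ∧
      ∀ x ∈ Set.Icc (0 : ℝ) T, g (μ x) = g (l x) := by
  have hv := strictMonoOn_padEnds hT hg.1 hg.2.1
  obtain ⟨q, hqT, hlq, hq⟩ := hmono.exists_strictMonoOn_comp_eq hbij.surjOn
    (padEnds_mem hT.le fun j => Ioo_subset_Icc_self (hg.2.1 j)) hv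
  have hlq' (k : ℕ) : l (q k) = padEnds 0 T t k := congrFun hlq k
  have hq0 : q 0 = 0 := hmono.injOn (hqT 0) (left_mem_Icc.2 hT.le) (by rw [hlq', h0]; rfl)
  have hqn : q (n + 1) = T :=
    hmono.injOn (hqT _) (right_mem_Icc.2 hT.le) (by rw [hlq', hTfix, padEnds_add_one])
  set μ := linInterp l q (n + 1)
  have hμq (k : ℕ) (hk : k ≤ n + 1) : μ (q k) = l (q k) := linInterp_apply_node hq hk
  have hμ0 : μ 0 = 0 := by rw [← hq0, hμq 0 (Nat.zero_le _), hq0, h0]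
  have hμT : μ T = T := by rw [← hqn, hμq _ le_rfl, hqn, hTfix]
  have hμmono : StrictMonoOn μ (Icc 0 T) := by
    simpa only [hq0, hqn] using strictMonoOn_linInterp hq (hlq ▸ hv)
  have hμbij : BijOn μ (Icc 0 T) (Icc 0 T) := by
    simpa only [hμ0, hμT] using hμmono.bijOn_Icc hT.le continuous_linInterp.continuousOn
  refine ⟨μ, piecewiseLinearOn_linInterp hq hq0 hqn, continuous_linInterp.continuousOn, hμmono,
    hμbij, hμ0, hμT, fun x hx => ?_⟩
  exact hg.comp_eq_comp hμmono hmono hμbij.mapsTo hbij.mapsTo (s := fun j => q (j + 1))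
    (fun _ => hqT _) (fun j => by rw [hμq _ (by omega), hlq', padEnds_succ])
    (fun j => by rw [hlq', padEnds_succ]) hx

/-- Any continuous increasing timing distortion can be replaced by a piecewise
linear one (with at most `n+1` pieces) without changing `g ∘ λ`. -/
theorem skorokhod_piecewise_linear {α : Type*} (T : ℝ) (hT : 0 < T)
    (g : ℝ → α) (n : ℕ) (t : Fin n → ℝ) (hg : IsStepWithChanges T g n t)
    (l : ℝ → ℝ) (hcont : ContinuousOn l (Set.Icc 0 T))
    (hmono : StrictMonoOn l (Set.Icc 0 T))
    (hbij : Set.BijOn l (Set.Icc 0 T) (Set.Icc 0 T)) (h0 : l 0 = 0) (hTfix : l T = T) :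
    ∃ μ : ℝ → ℝ, PiecewiseLinearOn T (n + 1) μ ∧
      ContinuousOn μ (Set.Icc 0 T) ∧ StrictMonoOn μ (Set.Icc 0 T) ∧
      Set.BijOn μ (Set.Icc 0 T) (Set.Icc 0 T) ∧ μ 0 = 0 ∧ μ T = T ∧
      ∀ x ∈ Set.Icc (0 : ℝ) T, g (μ x) = g (l x) :=
  skorokhod_piecewise_linear_general T hT g n t hg l hmono hbij h0 hTfix
end

section
/- The output of an ASC with integer delays at time t depends only on inputs at times with the same fractional part: if two inputs i₁, i₂ : [0,T] → {0,1}^m agree at all times s ≤ t with frac(s) = frac(t), then the outputs of the ASC on i₁ and i₂ agree at time t. -/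
/-!
Along the grid `x, x + 1, x + 2, …` with `0 ≤ x < 1` the delay lines only ever read values of `z`
at earlier grid points, since the delays are positive integers. So the state at `x + N` is a
function of the inputs at `x, …, x + (N - 1)`, by strong induction on `N`. Every `s ≤ t` with
`frac s = frac t` lies on the grid through `frac t`, and `t` itself is its `⌊t⌋`-th point.
-/

/-- A run of an asynchronous sequential circuit (ASC) whose `j`-th delay line has integer delay
`d j`: input `i`, delayed state `y`, next state `z` and output `o`, observed at times `t ≥ 0`. -/
structure IsASCRun {I O : Type*} {k : ℕ} (d : Fin k → ℕ) (f : I → (Fin k → Bool) → (Fin k → Bool))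
    (g : I → (Fin k → Bool) → O) (i : ℝ → I) (y z : ℝ → Fin k → Bool) (o : ℝ → O) : Prop where
  delay_eq : ∀ t : ℝ, 0 ≤ t → ∀ j, y t j = if t < (d j : ℝ) then false else z (t - (d j : ℝ)) j
  next_eq : ∀ t : ℝ, 0 ≤ t → z t = f (i t) (y t)
  output_eq : ∀ t : ℝ, 0 ≤ t → o t = g (i t) (y t)

namespace IsASCRun

variable {I O : Type*} {k : ℕ} {d : Fin k → ℕ} {f : I → (Fin k → Bool) → (Fin k → Bool)}
  {g : I → (Fin k → Bool) → O} {i₁ i₂ : ℝ → I} {y₁ y₂ z₁ z₂ : ℝ → Fin k → Bool} {o₁ o₂ : ℝ → O}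
  {x : ℝ}

theorem state_eq_of_input_eq (hd : ∀ j, 1 ≤ d j) (h₁ : IsASCRun d f g i₁ y₁ z₁ o₁)
    (h₂ : IsASCRun d f g i₂ y₂ z₂ o₂) (hx₀ : 0 ≤ x) (hx₁ : x < 1) (N : ℕ)
    (hi : ∀ n < N, i₁ (x + n) = i₂ (x + n)) : y₁ (x + N) = y₂ (x + N) := by
  induction N using Nat.strong_induction_on with
  | _ N ih =>
    funext j
    have hN : 0 ≤ x + N := by positivity
    rw [h₁.delay_eq _ hN, h₂.delay_eq _ hN]
    split_ifs with hlt
    · rfl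
    have hdN : d j ≤ N :=
      Nat.lt_succ_iff.mp <| by exact_mod_cast (show (d j : ℝ) < N + 1 by linarith)
    have hlt' : N - d j < N := by have := hd j; omega
    have hprev : x + N - d j = x + ↑(N - d j) := by push_cast [hdN]; ring
    have hs : 0 ≤ x + ↑(N - d j) := by positivity
    rw [hprev, h₁.next_eq _ hs, h₂.next_eq _ hs, hi _ hlt',
      ih _ hlt' fun n hn => hi n (hn.trans hlt')]

theorem output_eq_of_input_eq (hd : ∀ j, 1 ≤ d j) (h₁ : IsASCRun d f g i₁ y₁ z₁ o₁)
    (h₂ : IsASCRun d f g i₂ y₂ z₂ o₂) (hx₀ : 0 ≤ x) (hx₁ : x < 1) (N : ℕ)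
    (hi : ∀ n ≤ N, i₁ (x + n) = i₂ (x + n)) : o₁ (x + N) = o₂ (x + N) := by
  have hN : 0 ≤ x + N := by positivity
  rw [h₁.output_eq _ hN, h₂.output_eq _ hN, hi N le_rfl,
    state_eq_of_input_eq hd h₁ h₂ hx₀ hx₁ N fun n hn => hi n hn.le]

end IsASCRun

/-- The output of an ASC with integer delays at time `t` depends only on the
inputs at times `s ≤ t` having the same fractional part as `t`. -/
theorem asc_output_depends_on_fract (m n k : ℕ)
    (d : Fin k → ℕ) (hd : ∀ j, 1 ≤ d j)
    (f : (Fin m → Bool) → (Fin k → Bool) → (Fin k → Bool))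
    (g : (Fin m → Bool) → (Fin k → Bool) → (Fin n → Bool))
    (i₁ i₂ : ℝ → (Fin m → Bool)) (y₁ y₂ z₁ z₂ : ℝ → (Fin k → Bool))
    (o₁ o₂ : ℝ → (Fin n → Bool))
    (hy₁ : ∀ t : ℝ, 0 ≤ t → ∀ j : Fin k,
      y₁ t j = if t < (d j : ℝ) then false else z₁ (t - (d j : ℝ)) j)
    (hz₁ : ∀ t : ℝ, 0 ≤ t → z₁ t = f (i₁ t) (y₁ t))
    (ho₁ : ∀ t : ℝ, 0 ≤ t → o₁ t = g (i₁ t) (y₁ t))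
    (hy₂ : ∀ t : ℝ, 0 ≤ t → ∀ j : Fin k,
      y₂ t j = if t < (d j : ℝ) then false else z₂ (t - (d j : ℝ)) j)
    (hz₂ : ∀ t : ℝ, 0 ≤ t → z₂ t = f (i₂ t) (y₂ t))
    (ho₂ : ∀ t : ℝ, 0 ≤ t → o₂ t = g (i₂ t) (y₂ t))
    (t : ℝ) (ht : 0 ≤ t)
    (hagree : ∀ s : ℝ, 0 ≤ s → s ≤ t → Int.fract s = Int.fract t → i₁ s = i₂ s) :
    o₁ t = o₂ t := by
  have ht_eq : t = Int.fract t + ⌊t⌋₊ := by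
    rw [natCast_floor_eq_intCast_floor ht, Int.fract_add_floor]
  rw [ht_eq]
  refine IsASCRun.output_eq_of_input_eq hd ⟨hy₁, hz₁, ho₁⟩ ⟨hy₂, hz₂, ho₂⟩
    (Int.fract_nonneg t) (Int.fract_lt_one t) ⌊t⌋₊ fun n hn => hagree _ (by positivity) ?_ ?_
  · have : (n : ℝ) ≤ ⌊t⌋₊ := by exact_mod_cast hn
    linarith
  · rw [Int.fract_add_natCast, Int.fract_fract]
end
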